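/- Fix constants σ̄ > σ̃ > 0 and α > 0. Then the function F(R) = α·σ̄·P_0(R)/(α + R·P_0(R)) − σ̃/2 is strictly decreasing on (0, ∞) and has a unique positive zero R*. -/

import Mathlib

/-!
With `x = (r / 2) ^ 2`, `2 * P n r` is the quotient `T x / S x` of the power series
`T x = ∑ x ^ k / (k! (n + k + 1)!)` and `S x = ∑ x ^ k / (k! (n + k)!)`, whose coefficient ratio
`b_k / a_k = 1 / (n + k + 1)` decreases. For any such pair `T / S` is strictly decreasing on
`[0, ∞)`: in the Cauchy product expansion of `T x * S y - T y * S x`, the terms of index `(k, l)`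
and `(l, k)` pair up to `(b_k a_l - b_l a_k) (x^k y^l - y^k x^l) ≥ 0`.

Hence `F R = α σbar / (α / P 0 R + R) - σtil / 2` is strictly decreasing. As `R → 0⁺`,
`P 0 R → 1 / 2` and `F R → (σbar - σtil) / 2 > 0`, while `F R < α σbar / R - σtil / 2 ≤ 0` for
`R ≥ 2 α σbar / σtil`; the intermediate value theorem gives the zero.
-/
open Real Filter Set

/-- Modified Bessel function of the first kind of (integer) order `n`. -/
noncomputable def besselI (n : ℕ) (r : ℝ) : ℝ :=
  ∑' k : ℕ, (1 / (k.factorial * Real.Gamma (n + k + 1))) * (r / 2) ^ (n + 2 * k)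

/-- `P n r = I_{n+1}(r) / (r * I_n(r))`. -/
noncomputable def P (n : ℕ) (r : ℝ) : ℝ := besselI (n + 1) r / (r * besselI n r)

open scoped Nat Topology

theorem pow_mul_pow_le_pow_mul_pow {x y : ℝ} (hx : 0 ≤ x) (hxy : x ≤ y) {k l : ℕ} (hkl : k ≤ l) :
    y ^ k * x ^ l ≤ x ^ k * y ^ l := by
  obtain ⟨m, rfl⟩ := Nat.exists_eq_add_of_le hkl
  calc y ^ k * x ^ (k + m) = x ^ k * y ^ k * x ^ m := by ring
    _ ≤ x ^ k * y ^ k * y ^ m := by have := hx.trans hxy; gcongr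
    _ = x ^ k * y ^ (k + m) := by ring

theorem tsum_add_comp_swap {α : Type*} {v : α × α → ℝ} (hv : Summable v) :
    ∑' p, (v p + v p.swap) = 2 * ∑' p, v p := by
  have hswap : ∑' p : α × α, v p.swap = ∑' p, v p := (Equiv.prodComm α α).tsum_eq v
  rw [hv.tsum_add hv.prod_symm, hswap, two_mul]

section PowerSeries

variable {a b : ℕ → ℝ}

theorem tsum_mul_pow_pos (ha : ∀ k, 0 ≤ a k) (ha₀ : 0 < a 0) {x : ℝ} (hx : 0 ≤ x)
    (hs : Summable fun k => a k * x ^ k) : 0 < ∑' k, a k * x ^ k :=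
  hs.tsum_pos (fun k => mul_nonneg (ha k) (pow_nonneg hx k)) 0 (by simpa using ha₀)

theorem continuous_tsum_mul_pow (ha : ∀ k, 0 ≤ a k)
    (hs : ∀ x, 0 ≤ x → Summable fun k => a k * x ^ k) :
    Continuous fun x => ∑' k, a k * x ^ k := by
  refine continuous_iff_continuousAt.2 fun x => ?_
  have hX : 0 ≤ |x| + 1 := by positivity
  have hcont : ContinuousOn (fun x => ∑' k, a k * x ^ k) (Icc (-(|x| + 1)) (|x| + 1)) := by
    refine continuousOn_tsum (fun k => (continuous_const.mul (continuous_pow k)).continuousOn)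
      (hs _ hX) fun k t ht => ?_
    rw [norm_mul, norm_pow, Real.norm_of_nonneg (ha k)]
    exact mul_le_mul_of_nonneg_left (pow_le_pow_left₀ (norm_nonneg t) (abs_le.2 ht) k) (ha k)
  exact hcont.continuousAt (Icc_mem_nhds (by linarith [neg_abs_le x]) (by linarith [le_abs_self x]))

theorem cross_term_nonneg (ha : ∀ k, 0 < a k) (hab : Antitone fun k => b k / a k) {x y : ℝ}
    (hx : 0 ≤ x) (hxy : x ≤ y) (k l : ℕ) :
    0 ≤ (b k * a l - b l * a k) * (x ^ k * y ^ l - y ^ k * x ^ l) := by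
  -- Both factors have the sign of `l - k`.
  have hcoeff {i j : ℕ} (hij : i ≤ j) : 0 ≤ b i * a j - b j * a i := by
    have := (div_le_div_iff₀ (ha j) (ha i)).1 (hab hij)
    linarith
  have hpow {i j : ℕ} (hij : i ≤ j) : 0 ≤ x ^ i * y ^ j - y ^ i * x ^ j :=
    sub_nonneg.2 (pow_mul_pow_le_pow_mul_pow hx hxy hij)
  rcases le_total k l with h | h
  · exact mul_nonneg (hcoeff h) (hpow h)
  · exact mul_nonneg_of_nonpos_of_nonpos (by linarith [hcoeff h]) (by linarith [hpow h])

theorem tsum_mul_pow_cross_lt (ha : ∀ k, 0 < a k) (hab : StrictAnti fun k => b k / a k)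
    (hsa : ∀ x, 0 ≤ x → Summable fun k => a k * x ^ k)
    (hsb : ∀ x, 0 ≤ x → Summable fun k => b k * x ^ k) {x y : ℝ} (hx : 0 ≤ x) (hxy : x < y) :
    (∑' k, b k * y ^ k) * ∑' k, a k * x ^ k < (∑' k, b k * x ^ k) * ∑' k, a k * y ^ k := by
  have hy : 0 ≤ y := hx.trans hxy.le
  have hprod {z w : ℝ} (hz : 0 ≤ z) (hw : 0 ≤ w) :
      (∑' k, b k * z ^ k) * (∑' k, a k * w ^ k) =
        ∑' p : ℕ × ℕ, b p.1 * z ^ p.1 * (a p.2 * w ^ p.2) :=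
    tsum_mul_tsum_of_summable_norm (f := fun k => b k * z ^ k) (g := fun k => a k * w ^ k)
      (hsb z hz).norm (hsa w hw).norm
  have hsum {z w : ℝ} (hz : 0 ≤ z) (hw : 0 ≤ w) :
      Summable fun p : ℕ × ℕ => b p.1 * z ^ p.1 * (a p.2 * w ^ p.2) :=
    summable_mul_of_summable_norm (f := fun k => b k * z ^ k) (g := fun k => a k * w ^ k)
      (hsb z hz).norm (hsa w hw).norm
  set v : ℕ × ℕ → ℝ := fun p =>
    b p.1 * x ^ p.1 * (a p.2 * y ^ p.2) - b p.1 * y ^ p.1 * (a p.2 * x ^ p.2) with hv_def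
  have hv : Summable v := (hsum hx hy).sub (hsum hy hx)
  have hdiff : (∑' k, b k * x ^ k) * (∑' k, a k * y ^ k)
      - (∑' k, b k * y ^ k) * (∑' k, a k * x ^ k) = ∑' p, v p := by
    rw [hprod hx hy, hprod hy hx, (hsum hx hy).tsum_sub (hsum hy hx)]
  have hsymm (p : ℕ × ℕ) : v p + v p.swap =
      (b p.1 * a p.2 - b p.2 * a p.1) * (x ^ p.1 * y ^ p.2 - y ^ p.1 * x ^ p.2) := by
    simp only [hv_def, Prod.fst_swap, Prod.snd_swap]
    ring
  have hterm (p : ℕ × ℕ) : 0 ≤ v p + v p.swap :=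
    hsymm p ▸ cross_term_nonneg ha hab.antitone hx hxy.le p.1 p.2
  have hterm₀ : 0 < v (0, 1) + v (0, 1).swap := by
    have := (div_lt_div_iff₀ (ha 1) (ha 0)).1 (hab zero_lt_one)
    rw [hsymm]
    exact mul_pos (by linarith) (by simpa using hxy)
  have hpos := (hv.add hv.prod_symm).tsum_pos hterm (0, 1) hterm₀
  rw [tsum_add_comp_swap hv] at hpos
  linarith

theorem strictAntiOn_tsum_mul_pow_div_tsum_mul_pow (ha : ∀ k, 0 < a k)
    (hab : StrictAnti fun k => b k / a k)
    (hsa : ∀ x, 0 ≤ x → Summable fun k => a k * x ^ k)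
    (hsb : ∀ x, 0 ≤ x → Summable fun k => b k * x ^ k) :
    StrictAntiOn (fun x => (∑' k, b k * x ^ k) / ∑' k, a k * x ^ k) (Ici 0) := by
  intro x hx y hy hxy
  have hpos {z : ℝ} (hz : 0 ≤ z) := tsum_mul_pow_pos (fun k => (ha k).le) (ha 0) hz (hsa z hz)
  rw [div_lt_div_iff₀ (hpos hy) (hpos hx)]
  exact tsum_mul_pow_cross_lt ha hab hsa hsb hx hxy

end PowerSeries

noncomputable def besselCoeff (n k : ℕ) : ℝ := ((k ! : ℝ) * (n + k)!)⁻¹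

theorem besselCoeff_pos (n k : ℕ) : 0 < besselCoeff n k := by
  unfold besselCoeff
  positivity

theorem besselCoeff_succ_div (n k : ℕ) :
    besselCoeff (n + 1) k / besselCoeff n k = ((n : ℝ) + k + 1)⁻¹ := by
  rw [besselCoeff, besselCoeff, add_right_comm, Nat.factorial_succ]
  push_cast
  field_simp

theorem strictAnti_besselCoeff_succ_div (n : ℕ) :
    StrictAnti fun k => besselCoeff (n + 1) k / besselCoeff n k := by
  intro k l hkl
  simp only [besselCoeff_succ_div]
  gcongr

theorem summable_besselCoeff_mul_pow (n : ℕ) {x : ℝ} (hx : 0 ≤ x) :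
    Summable fun k => besselCoeff n k * x ^ k := by
  refine (Real.summable_pow_div_factorial x).of_nonneg_of_le
    (fun k => mul_nonneg (besselCoeff_pos n k).le (pow_nonneg hx k)) fun k => ?_
  have hk : (1 : ℝ) ≤ (n + k)! := mod_cast (n + k).factorial_pos
  have hcoeff : besselCoeff n k ≤ (k ! : ℝ)⁻¹ :=
    inv_anti₀ (by positivity) (le_mul_of_one_le_right (by positivity) hk)
  rw [div_eq_inv_mul]
  exact mul_le_mul_of_nonneg_right hcoeff (pow_nonneg hx k)

theorem besselI_eq_tsum (n : ℕ) (r : ℝ) :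
    besselI n r = (r / 2) ^ n * ∑' k, besselCoeff n k * ((r / 2) ^ 2) ^ k := by
  rw [besselI, ← tsum_mul_left]
  congr 1 with k
  have hΓ : (n : ℝ) + k + 1 = ((n + k : ℕ) : ℝ) + 1 := by push_cast; ring
  rw [hΓ, Real.Gamma_nat_eq_factorial, besselCoeff, pow_add, pow_mul]
  ring

noncomputable def besselRatio (n : ℕ) (x : ℝ) : ℝ :=
  (∑' k, besselCoeff (n + 1) k * x ^ k) / ∑' k, besselCoeff n k * x ^ k

theorem besselRatio_pos (n : ℕ) {x : ℝ} (hx : 0 ≤ x) : 0 < besselRatio n x := by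
  have hpos (m : ℕ) := tsum_mul_pow_pos (fun k => (besselCoeff_pos m k).le)
    (besselCoeff_pos m 0) hx (summable_besselCoeff_mul_pow m hx)
  exact div_pos (hpos (n + 1)) (hpos n)

theorem besselRatio_zero (n : ℕ) : besselRatio n 0 = ((n : ℝ) + 1)⁻¹ := by
  have hconst (m : ℕ) : ∑' k, besselCoeff m k * (0 : ℝ) ^ k = besselCoeff m 0 :=
    (tsum_eq_single 0 fun k hk => by simp [hk]).trans (by simp)
  rw [besselRatio, hconst, hconst, besselCoeff_succ_div, Nat.cast_zero, add_zero]

theorem strictAntiOn_besselRatio (n : ℕ) : StrictAntiOn (besselRatio n) (Ici 0) :=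
  strictAntiOn_tsum_mul_pow_div_tsum_mul_pow (besselCoeff_pos n)
    (strictAnti_besselCoeff_succ_div n) (fun _ => summable_besselCoeff_mul_pow n)
    (fun _ => summable_besselCoeff_mul_pow (n + 1))

theorem continuousOn_besselRatio (n : ℕ) : ContinuousOn (besselRatio n) (Ici 0) := by
  have hcont (m : ℕ) := continuous_tsum_mul_pow (fun k => (besselCoeff_pos m k).le)
    (fun _ => summable_besselCoeff_mul_pow m)
  refine (hcont (n + 1)).continuousOn.div (hcont n).continuousOn fun x hx => ?_
  exact (tsum_mul_pow_pos (fun k => (besselCoeff_pos n k).le) (besselCoeff_pos n 0) hx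
    (summable_besselCoeff_mul_pow n hx)).ne'

theorem P_eq_besselRatio (n : ℕ) {r : ℝ} (hr : r ≠ 0) :
    P n r = besselRatio n ((r / 2) ^ 2) / 2 := by
  rw [P, besselI_eq_tsum, besselI_eq_tsum, besselRatio]
  field_simp
  ring

theorem continuous_besselRatio_sq_div (n : ℕ) :
    Continuous fun r => besselRatio n ((r / 2) ^ 2) / 2 :=
  ((continuousOn_besselRatio n).comp_continuous (by fun_prop)
    fun r => mem_Ici.2 (sq_nonneg _)).div_const 2

theorem P_pos (n : ℕ) {r : ℝ} (hr : 0 < r) : 0 < P n r := by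
  rw [P_eq_besselRatio n hr.ne']
  exact half_pos (besselRatio_pos n (sq_nonneg _))

theorem strictAntiOn_P (n : ℕ) : StrictAntiOn (P n) (Ioi 0) := by
  intro r hr s hs hrs
  rw [P_eq_besselRatio n (ne_of_gt hr), P_eq_besselRatio n (ne_of_gt hs)]
  have hsq : (r / 2) ^ 2 < (s / 2) ^ 2 := by gcongr; exact (div_pos hr two_pos).le
  exact div_lt_div_of_pos_right
    (strictAntiOn_besselRatio n (mem_Ici.2 (sq_nonneg _)) (mem_Ici.2 (sq_nonneg _)) hsq) two_pos

theorem continuousOn_P (n : ℕ) : ContinuousOn (P n) (Ioi 0) :=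
  (continuous_besselRatio_sq_div n).continuousOn.congr fun _ hr => P_eq_besselRatio n (ne_of_gt hr)

theorem tendsto_P_nhdsGT_zero (n : ℕ) :
    Tendsto (P n) (𝓝[>] 0) (𝓝 (((n : ℝ) + 1)⁻¹ / 2)) := by
  have h := ((continuous_besselRatio_sq_div n).tendsto 0).mono_left
    (nhdsWithin_le_nhds (s := Ioi 0))
  rw [zero_div, zero_pow two_ne_zero, besselRatio_zero] at h
  exact h.congr' (eventually_nhdsWithin_of_forall fun r hr =>
    (P_eq_besselRatio n (ne_of_gt hr)).symm)

theorem strictAntiOn_mul_div_add_mul {p : ℝ → ℝ} {c α : ℝ} (hc : 0 < c) (hα : 0 ≤ α)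
    (hp : ∀ R ∈ Ioi 0, 0 < p R) (hanti : AntitoneOn p (Ioi 0)) :
    StrictAntiOn (fun R => c * p R / (α + R * p R)) (Ioi 0) := by
  have hrw : ∀ R ∈ Ioi (0 : ℝ), c * p R / (α + R * p R) = c / (α / p R + R) := by
    intro R hR
    have := hp R hR
    field_simp
  intro r hr s hs hrs
  simp only [hrw r hr, hrw s hs]
  have hmono : α / p r ≤ α / p s := div_le_div_of_nonneg_left hα (hp s hs) (hanti hr hs hrs.le)
  have : 0 < α / p r + r := add_pos_of_nonneg_of_pos (div_nonneg hα (hp r hr).le) hr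
  exact div_lt_div_of_pos_left hc this (by linarith)

theorem continuousOn_mul_div_add_mul {p : ℝ → ℝ} {c α : ℝ} (hα : 0 ≤ α)
    (hp : ∀ R ∈ Ioi 0, 0 < p R) (hcont : ContinuousOn p (Ioi 0)) :
    ContinuousOn (fun R => c * p R / (α + R * p R)) (Ioi 0) :=
  (continuousOn_const.mul hcont).div (continuousOn_const.add (continuousOn_id.mul hcont))
    fun R hR => (add_pos_of_nonneg_of_pos hα (mul_pos hR (hp R hR))).ne'

theorem tendsto_mul_div_add_mul_nhdsGT_zero {p : ℝ → ℝ} {c α a : ℝ} (hα : α ≠ 0)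
    (hp : Tendsto p (𝓝[>] 0) (𝓝 a)) :
    Tendsto (fun R => c * p R / (α + R * p R)) (𝓝[>] 0) (𝓝 (c * a / α)) := by
  have hden : Tendsto (fun R => α + R * p R) (𝓝[>] 0) (𝓝 α) := by
    simpa using tendsto_const_nhds.add ((tendsto_nhdsWithin_of_tendsto_nhds tendsto_id).mul hp)
  exact (tendsto_const_nhds.mul hp).div hden hα

theorem F_strictAnti_unique_zero (σbar σtil α : ℝ)
    (hσ : σtil < σbar) (hσt : 0 < σtil) (hα : 0 < α) :
    StrictAntiOn (fun R : ℝ => α * σbar * P 0 R / (α + R * P 0 R) - σtil / 2) (Set.Ioi 0) ∧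
    ∃! R : ℝ, 0 < R ∧ α * σbar * P 0 R / (α + R * P 0 R) - σtil / 2 = 0 := by
  set F := fun R : ℝ => α * σbar * P 0 R / (α + R * P 0 R) - σtil / 2 with hF
  have hσbar : 0 < σbar := hσt.trans hσ
  have hanti : StrictAntiOn F (Ioi 0) := fun r hr s hs hrs =>
    sub_lt_sub_right (strictAntiOn_mul_div_add_mul (by positivity) hα.le (fun _ => P_pos 0)
      (strictAntiOn_P 0).antitoneOn hr hs hrs) _
  have hcont : ContinuousOn F (Ioi 0) :=
    (continuousOn_mul_div_add_mul hα.le (fun _ => P_pos 0) (continuousOn_P 0)).sub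
      continuousOn_const
  have hlim : Tendsto F (𝓝[>] 0) (𝓝 ((σbar - σtil) / 2)) := by
    have h := (tendsto_mul_div_add_mul_nhdsGT_zero (c := α * σbar) hα.ne'
      (tendsto_P_nhdsGT_zero 0)).sub_const (σtil / 2)
    convert h using 2
    field_simp
    ring
  obtain ⟨r₀, hFr₀, hr₀⟩ := ((hlim.eventually
    (lt_mem_nhds (show (0 : ℝ) < (σbar - σtil) / 2 by linarith))).and self_mem_nhdsWithin).exists
  -- `F R < α * σbar / R - σtil / 2` because `P 0 R > 0`.
  have hr₁ : 0 < 2 * α * σbar / σtil := by positivity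
  have hFr₁ : F (2 * α * σbar / σtil) < 0 := by
    have hp := P_pos 0 hr₁
    rw [hF, sub_neg, div_lt_iff₀ (by positivity)]
    field_simp
    nlinarith [mul_pos hα hσt]
  obtain ⟨R, hR, hFR⟩ := isPreconnected_Ioi.intermediate_value hr₁ hr₀ hcont ⟨hFr₁.le, hFr₀.le⟩
  exact ⟨hanti, R, ⟨hR, hFR⟩, fun S ⟨hS, hFS⟩ => hanti.injOn hS hR (hFS.trans hFR.symm)⟩
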